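/- Let H = ℓ² (or any infinite-dimensional Hilbert space with orthonormal system {e_i}) and K = { x ∈ H : ‖x‖ ≥ 1 }. Set x̄ = e₁, p₀ = (1/2)e₁, and fix L > 2. Then for tₙ ↘ 0, the sequence zₙ := −L tₙ e₁ + e₂ + L e_n (n > 2) satisfies x̄ + tₙ zₙ ∈ K, zₙ ⇀ e₂, and (δ_K(x̄ + tₙ zₙ) − tₙ⟨p₀ − x̄, zₙ⟩)/(tₙ²/2) = −(2/tₙ)⟨p₀ − x̄, zₙ⟩ → −∞ as appropriate choices show; consequently the weak second subderivative Q_{δ_K}^{x̄, p₀ − x̄}(e₂) = −∞. -/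

import Mathlib

open Filter Topology
open scoped RealInnerProductSpace Classical

variable {H : Type*} [NormedAddCommGroup H] [InnerProductSpace ℝ H] [CompleteSpace H]

/-- Second-order difference quotient of `j` at `x` for `g` with step `t` and direction `w`. -/
noncomputable def secondQuotH (j : H → EReal) (x g : H) (t : ℝ) (w : H) : EReal :=
  ((2 / t ^ 2 : ℝ) : EReal) * (j (x + t • w) - j x - ((t * ⟪g, w⟫ : ℝ) : EReal))

/-- Weak convergence of a sequence in the Hilbert space `H`. -/
def WeakTendstoH (z : ℕ → H) (z₀ : H) : Prop :=
  ∀ w : H, Tendsto (fun n => ⟪z n, w⟫) atTop (nhds ⟪z₀, w⟫)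

/-- The weak second subderivative of `j` at `x` for `g`. -/
noncomputable def QsubH (j : H → EReal) (x g z : H) : EReal :=
  sInf { L | ∃ (t : ℕ → ℝ) (zs : ℕ → H),
      (∀ n, 0 < t n) ∧ Tendsto t atTop (nhds 0) ∧ WeakTendstoH zs z ∧
      L = Filter.liminf (fun n => secondQuotH j x g (t n) (zs n)) atTop }

/-- The indicator function of a set, with values in `EReal`. -/
noncomputable def indicatorE (K : Set H) : H → EReal := fun y => if y ∈ K then 0 else ⊤

/-- The tangent cone `T_K(x) = cl(ℝ⁺ (K - x))`. -/
def tangentConeH (K : Set H) (x : H) : Set H :=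
  closure { z : H | ∃ c : ℝ, 0 ≤ c ∧ ∃ k ∈ K, z = c • (k - x) }

/-- The second-order tangent set `T²_K(x, z)`. -/
def secondTangentH (K : Set H) (x z : H) : Set H :=
  { r : H | Tendsto (fun t : ℝ => Metric.infDist (x + t • z + (t ^ 2 / 2) • r) K / t ^ 2)
      (nhdsWithin 0 (Set.Ioi 0)) (nhds 0) }

/-- The proximal normal cone condition: `v ∈ N^P_K(x̄)`. -/
def ProxNormal (K : Set H) (xb v : H) : Prop :=
  ∃ l : ℝ, 0 ≤ l ∧ ∃ y : H, (xb ∈ K ∧ ∀ k ∈ K, ‖xb - y‖ ≤ ‖k - y‖) ∧ v = l • (y - xb)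

/-- `K` is `r`-prox-regular. -/
def ProxRegular (r : ℝ) (K : Set H) : Prop :=
  ∀ xb ∈ K, ∀ x ∈ K, ∀ v : H, ProxNormal K xb v →
    r * ⟪v, x - xb⟫ ≤ (1 / 2) * ‖v‖ * ‖x - xb‖ ^ 2

/-- Strong second-order epi-differentiability of `j` at `x` for `g`. -/
def StrongTwiceEpiH (j : H → EReal) (x g : H) : Prop :=
  ∀ z : H, ∀ t : ℕ → ℝ, (∀ n, 0 < t n) → Tendsto t atTop (nhds 0) →
    ∃ zs : ℕ → H, Tendsto zs atTop (nhds z) ∧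
      Tendsto (fun n => secondQuotH j x g (t n) (zs n)) atTop (nhds (QsubH j x g z))

section

variable {E : Type*} [NormedAddCommGroup E] [InnerProductSpace ℝ E]

namespace Orthonormal

variable {e : ℕ → E} (he : Orthonormal ℝ e)
include he

/-- Bessel's inequality makes `n ↦ ⟪e n, w⟫` square-summable, so its terms tend to `0`. -/
lemma tendsto_inner_left_atTop_zero (w : E) : Tendsto (fun n => ⟪e n, w⟫) atTop (𝓝 0) := by
  have hsq : Tendsto (fun n => ‖⟪e n, w⟫‖ ^ 2) atTop (𝓝 0) :=
    he.inner_products_summable w |>.tendsto_atTop_zero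
  have hnorm := hsq.sqrt
  simp only [Real.sqrt_sq_eq_abs, abs_norm, Real.sqrt_zero] at hnorm
  exact tendsto_zero_iff_norm_tendsto_zero.2 hnorm

lemma weakTendstoH_smul_add_add_smul {a : ℕ → ℝ} (ha : Tendsto a atTop (𝓝 0)) (u v : E) (c : ℝ) :
    WeakTendstoH (fun n => a n • u + v + c • e n) v := by
  intro w
  simp only [inner_add_left, real_inner_smul_left]
  simpa using ((ha.mul_const ⟪u, w⟫).add_const ⟪v, w⟫).add
    ((he.tendsto_inner_left_atTop_zero w).const_mul c)

lemma norm_sq_smul_add_smul_add_smul {i j k : ℕ} (hij : i ≠ j) (hik : i ≠ k) (hjk : j ≠ k)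
    (a b c : ℝ) : ‖a • e i + b • e j + c • e k‖ ^ 2 = a ^ 2 + b ^ 2 + c ^ 2 := by
  rw [← real_inner_self_eq_norm_sq]
  simp only [inner_add_left, inner_add_right, real_inner_smul_left, real_inner_smul_right,
    orthonormal_iff_ite.mp he, if_neg hij, if_neg hik, if_neg hjk, if_neg hij.symm,
    if_neg hik.symm, if_neg hjk.symm, if_true]
  ring

end Orthonormal

lemma secondQuotH_indicatorE_of_mem {K : Set E} {x g w : E} {t : ℝ} (ht : t ≠ 0) (hx : x ∈ K)
    (hxw : x + t • w ∈ K) :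
    secondQuotH (indicatorE K) x g t w = ((-(2 / t * ⟪g, w⟫) : ℝ) : EReal) := by
  simp only [secondQuotH, indicatorE, if_pos hx, if_pos hxw, sub_zero, zero_sub]
  rw [← EReal.coe_neg, ← EReal.coe_mul]
  congr 1
  field_simp

lemma QsubH_le_of_eventually_eq {j : E → EReal} {x g z : E} {t : ℕ → ℝ} {zs : ℕ → E}
    (ht : ∀ n, 0 < t n) (ht0 : Tendsto t atTop (𝓝 0)) (hzs : WeakTendstoH zs z) {c : EReal}
    (hc : ∀ᶠ n in atTop, secondQuotH j x g (t n) (zs n) = c) : QsubH j x g z ≤ c :=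
  sInf_le ⟨t, zs, ht, ht0, hzs, by rw [liminf_congr hc, liminf_const]⟩

/-- `‖e₀ + tₙ zₙ‖² = 1 + (L − 1)² tₙ² + L² tₙ⁴ ≥ 1` keeps the probe feasible, while
`⟪½e₀ − e₀, zₙ⟫ = L tₙ / 2` makes every quotient `−L`. -/
lemma probe_weakTendsto_and_secondQuot_eq {e : ℕ → E} (he : Orthonormal ℝ e) (L : ℝ)
    {t : ℕ → ℝ} (ht : ∀ n, 0 < t n) (ht0 : Tendsto t atTop (𝓝 0)) :
    WeakTendstoH (fun n => (-(L * t n)) • e 0 + e 1 + L • e n) (e 1) ∧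
      ∀ n, 2 ≤ n →
        e 0 + t n • ((-(L * t n)) • e 0 + e 1 + L • e n) ∈ { x : E | 1 ≤ ‖x‖ } ∧
        secondQuotH (indicatorE { x : E | 1 ≤ ‖x‖ }) (e 0) (((1 : ℝ) / 2) • e 0 - e 0)
          (t n) ((-(L * t n)) • e 0 + e 1 + L • e n) = ((-L : ℝ) : EReal) := by
  have hLt : Tendsto (fun n => -(L * t n)) atTop (𝓝 0) := by
    simpa using (ht0.const_mul L).neg
  refine ⟨he.weakTendstoH_smul_add_add_smul hLt _ _ L, fun n hn => ?_⟩
  set s := t n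
  have hs : 0 < s := ht n
  have h0n : 0 ≠ n := by omega
  have h1n : 1 ≠ n := by omega
  have hpoint : e 0 + s • ((-(L * s)) • e 0 + e 1 + L • e n)
      = (1 - L * s ^ 2) • e 0 + s • e 1 + (L * s) • e n := by
    rw [show (1 : ℝ) - L * s ^ 2 = 1 + s * (-(L * s)) by ring]
    module
  have hmem : e 0 + s • ((-(L * s)) • e 0 + e 1 + L • e n) ∈ { x : E | 1 ≤ ‖x‖ } := by
    have hsq : 1 ≤ ‖e 0 + s • ((-(L * s)) • e 0 + e 1 + L • e n)‖ ^ 2 := by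
      rw [hpoint, he.norm_sq_smul_add_smul_add_smul zero_ne_one h0n h1n]
      nlinarith [sq_nonneg ((L - 1) * s), sq_nonneg (L * s ^ 2)]
    exact one_le_sq_iff_one_le_abs _ |>.mp hsq |>.trans_eq (abs_norm _)
  have hinner : ⟪((1 : ℝ) / 2) • e 0 - e 0, (-(L * s)) • e 0 + e 1 + L • e n⟫ = L * s / 2 := by
    simp only [inner_sub_left, inner_add_right, real_inner_smul_left, real_inner_smul_right,
      orthonormal_iff_ite.mp he, if_neg h0n, if_neg zero_ne_one, if_true]
    ring
  refine ⟨hmem, ?_⟩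
  have he0 : e 0 ∈ { x : E | 1 ≤ ‖x‖ } := (he.1 0).ge
  rw [secondQuotH_indicatorE_of_mem hs.ne' he0 hmem, hinner]
  congr 1
  field_simp

end

theorem Qsub_indicator_complement_ball_eq_bot_general
    (e : ℕ → H) (he : Orthonormal ℝ e) (L : ℝ) :
    (∀ t : ℕ → ℝ, (∀ n, 0 < t n) → Tendsto t atTop (nhds 0) →
      WeakTendstoH (fun n => (-(L * t n)) • e 0 + e 1 + L • e n) (e 1) ∧
      ∀ n, 2 ≤ n →
        e 0 + t n • ((-(L * t n)) • e 0 + e 1 + L • e n) ∈ { x : H | 1 ≤ ‖x‖ } ∧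
        secondQuotH (indicatorE { x : H | 1 ≤ ‖x‖ }) (e 0) (((1 : ℝ) / 2) • e 0 - e 0)
          (t n) ((-(L * t n)) • e 0 + e 1 + L • e n) = ((-L : ℝ) : EReal)) ∧
    QsubH (indicatorE { x : H | 1 ≤ ‖x‖ }) (e 0) (((1 : ℝ) / 2) • e 0 - e 0) (e 1) = ⊥ := by
  refine ⟨fun t ht ht0 => probe_weakTendsto_and_secondQuot_eq he L ht ht0, ?_⟩
  rw [EReal.eq_bot_iff_forall_lt]
  intro y
  have ht : ∀ n : ℕ, 0 < 1 / ((n : ℝ) + 1) := fun n => by positivity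
  obtain ⟨hweak, hquot⟩ :=
    probe_weakTendsto_and_secondQuot_eq he (1 - y) ht tendsto_one_div_add_atTop_nhds_zero_nat
  calc _ ≤ ((-(1 - y) : ℝ) : EReal) :=
        QsubH_le_of_eventually_eq ht tendsto_one_div_add_atTop_nhds_zero_nat hweak
          (eventually_atTop.2 ⟨2, fun n hn => (hquot n hn).2⟩)
    _ < y := by exact_mod_cast (by linarith : -(1 - y) < y)

/-- for `K = {x : ‖x‖ ≥ 1}`, `x̄ = e₁ = proj_K(p₀)` with `p₀ = ½e₁`, and
`L > 2`, the sequences `zₙ = −Ltₙe₁ + e₂ + Leₙ` are feasible, converge weakly to `e₂`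
and have second-order difference quotient `−L`; consequently the weak second
subderivative of `δ_K` at `x̄` for `p₀ − x̄` equals `−∞` at `e₂`. -/
theorem Qsub_indicator_complement_ball_eq_bot
    (e : ℕ → H) (he : Orthonormal ℝ e) (L : ℝ) (hL : 2 < L) :
    (∀ t : ℕ → ℝ, (∀ n, 0 < t n) → Tendsto t atTop (nhds 0) →
      WeakTendstoH (fun n => (-(L * t n)) • e 0 + e 1 + L • e n) (e 1) ∧
      ∀ n, 2 ≤ n →
        e 0 + t n • ((-(L * t n)) • e 0 + e 1 + L • e n) ∈ { x : H | 1 ≤ ‖x‖ } ∧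
        secondQuotH (indicatorE { x : H | 1 ≤ ‖x‖ }) (e 0) (((1 : ℝ) / 2) • e 0 - e 0)
          (t n) ((-(L * t n)) • e 0 + e 1 + L • e n) = ((-L : ℝ) : EReal)) ∧
    QsubH (indicatorE { x : H | 1 ≤ ‖x‖ }) (e 0) (((1 : ℝ) / 2) • e 0 - e 0) (e 1) = ⊥ :=
  Qsub_indicator_complement_ball_eq_bot_general e he L
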